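/- Normal order delivers normal forms: if no(M) = N then N is a normal form (NF). -/
import Mathlib


/-- Pure λ-calculus terms (de Bruijn representation). -/
inductive Tm : Type
  | var : Nat → Tm
  | lam : Tm → Tm
  | app : Tm → Tm → Tm
deriving DecidableEq

/-- Shift the free variables (those ≥ `c`) of a term up by one. -/
def lift (c : Nat) : Tm → Tm
  | .var n => if n < c then .var n else .var (n + 1)
  | .lam b => .lam (lift (c + 1) b)
  | .app m n => .app (lift c m) (lift c n)

/-- Capture-avoiding substitution `[N/k]B` (de Bruijn). -/
def subst (N : Tm) (k : Nat) : Tm → Tm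
  | .var n => if n < k then .var n else if n = k then N else .var (n - 1)
  | .lam b => .lam (subst (lift 0 N) (k + 1) b)
  | .app m n => .app (subst N k m) (subst N k n)
/-- Call-by-name big-step relation. -/
inductive Bn : Tm → Tm → Prop
  | var : ∀ n, Bn (.var n) (.var n)
  | lam : ∀ B, Bn (.lam B) (.lam B)
  | beta : ∀ M N B B', Bn M (.lam B) → Bn (subst N 0 B) B' → Bn (.app M N) B'
  | neu : ∀ M N M', Bn M M' → (∀ B, M' ≠ .lam B) → Bn (.app M N) (.app M' N)
/-- Normal order big-step relation (with call-by-name as subsidiary). -/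
inductive No : Tm → Tm → Prop
  | var : ∀ n, No (.var n) (.var n)
  | lam : ∀ B B', No B B' → No (.lam B) (.lam B')
  | beta : ∀ M N B B', Bn M (.lam B) → No (subst N 0 B) B' → No (.app M N) B'
  | neu : ∀ M N M' M'' N', Bn M M' → (∀ B, M' ≠ .lam B) → No M' M'' → No N N' →
      No (.app M N) (.app M'' N')
mutual
  /-- Normal forms: NF ::= λx.NF | x F1 … Fn with each Fi ∈ NF. -/
  inductive Nf : Tm → Prop
    | lam : ∀ B, Nf B → Nf (.lam B)
    | ne : ∀ M, NeNf M → Nf M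
  /-- Neutral normal forms: x F1 … Fn with each Fi ∈ NF. -/
  inductive NeNf : Tm → Prop
    | var : ∀ n, NeNf (.var n)
    | app : ∀ M N, NeNf M → Nf N → NeNf (.app M N)
end


inductive BnNe : Tm → Prop
  | var : ∀ n, BnNe (.var n)
  | app : ∀ M N, BnNe M → BnNe (.app M N)

lemma bn_fix : ∀ M M', Bn M M' → BnNe M → M' = M := by
  intro M M' h
  induction h with
  | var n => intro _; rfl
  | lam B => intro h; cases h
  | beta M N B B' h1 h2 ih1 ih2 =>
      intro h; cases h with
      | app _ _ hM => exact absurd (ih1 hM).symm (by intro he; rw [he] at hM; cases hM)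
  | neu M N M' h hne ih =>
      intro h'; cases h' with
      | app _ _ hM => rw [ih hM]

lemma bn_shape : ∀ M M', Bn M M' → (∃ B, M' = .lam B) ∨ BnNe M' := by
  intro M M' h
  induction h with
  | var n => exact Or.inr (BnNe.var n)
  | lam B => exact Or.inl ⟨B, rfl⟩
  | beta M N B B' h1 h2 ih1 ih2 => exact ih2
  | neu M N M' h hne ih =>
      rcases ih with ⟨B, hB⟩ | hne' 
      · exact absurd hB (hne B)
      · exact Or.inr (BnNe.app _ _ hne')

lemma no_main : ∀ M N : Tm, No M N → Nf N ∧ (BnNe M → NeNf N) := by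
  intro M N h
  induction h with
  | var n => exact ⟨Nf.ne _ (NeNf.var n), fun _ => NeNf.var n⟩
  | lam B B' h ih => exact ⟨Nf.lam _ ih.1, fun hc => by cases hc⟩
  | beta M N B B' h1 h2 ih =>
      refine ⟨ih.1, fun hc => ?_⟩
      cases hc with
      | app _ _ hM =>
          have := bn_fix _ _ h1 hM
          rw [← this] at hM; cases hM
  | neu M N M' M'' N' h hne h1 h2 ih1 ih2 =>
      have hM' : BnNe M' := by
        rcases bn_shape _ _ h with ⟨B, hB⟩ | hx
        · exact absurd hB (hne B)
        · exact hx
      have hNe : NeNf (.app M'' N') := NeNf.app _ _ (ih1.2 hM') ih2.1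
      exact ⟨Nf.ne _ hNe, fun _ => hNe⟩

/-- Normal order delivers normal forms. -/
theorem no_delivers_nf : ∀ M N : Tm, No M N → Nf N := by
  intro M N h
  exact (no_main M N h).1
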